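/- Under the stated hypotheses, suppose both I + R_x and I − R_x are invertible for all x in an open interval J. Then the scalar function W(x) = C(exp(−xA)·(I − R_x²)⁻¹·R_x·exp(−xA)·b) is differentiable on J and satisfies W′(x) = −2·V(x)², where V(x) = −C(exp(−xA)·(I − R_x²)⁻¹·exp(−xA)·b). -/

import Mathlib

open MeasureTheory

/-- The semigroup `exp(-tA)` generated by a bounded operator `A`. -/
noncomputable def expA {H : Type*} [NormedAddCommGroup H] [InnerProductSpace ℂ H]
    [CompleteSpace H] (A : H →L[ℂ] H) (t : ℝ) : H →L[ℂ] H :=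
  NormedSpace.exp ((-(t : ℂ)) • A)

/-- `R_x = ∫_x^∞ exp(-tA)·BC·exp(-tA) dt` as a Bochner integral. -/
noncomputable def Rop {H : Type*} [NormedAddCommGroup H] [InnerProductSpace ℂ H]
    [CompleteSpace H] (A : H →L[ℂ] H) (BC : H →L[ℂ] H) (x : ℝ) : H →L[ℂ] H :=
  ∫ t in Set.Ioi x, expA A t * BC * expA A t

/-! Differentiating `R_x` gives `R' = -S` with `S_x = exp(-xA) BC exp(-xA)`, and integrating
`S_t' = -(A S_t + S_t A)` over `(x, ∞)` gives the Lyapunov equation `A R + R A = S`. With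
`P = (1 - R²)⁻¹`, the product rule and the Lyapunov equation collapse the derivative of
`exp(-xA) P R exp(-xA)` to `-2 exp(-xA) P S P exp(-xA)`. Since `BC` has rank one,
`C(exp(-xA) P S P exp(-xA) b)` factors as the square of `C(exp(-xA) P exp(-xA) b)`. -/

open Set Filter Topology

theorem hasDerivAt_integral_Ioi {E : Type*} [NormedAddCommGroup E] [NormedSpace ℝ E]
    [CompleteSpace E] {f : ℝ → E} {a x : ℝ} (hf : Continuous f) (hfi : IntegrableOn f (Ioi a))
    (hax : a < x) :
    HasDerivAt (fun y => ∫ t in Ioi y, f t) (-f x) x := by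
  have hsplit : ∀ y ∈ Ioi a, ∫ t in Ioi y, f t = (∫ t in Ioi a, f t) - ∫ t in a..y, f t :=
    fun y hy => eq_sub_of_add_eq' <|
      intervalIntegral.integral_interval_add_Ioi hfi (hfi.mono_set (Ioi_subset_Ioi hy.out.le))
  have hFTC := intervalIntegral.integral_hasDerivAt_right (hf.intervalIntegrable a x)
    (hf.stronglyMeasurableAtFilter _ _) hf.continuousAt
  exact (hFTC.const_sub _).congr_of_eventuallyEq
    (eventually_of_mem (Ioi_mem_nhds hax) hsplit)

theorem mul_integral_Ioi_add_integral_Ioi_mul {𝔸 : Type*} [NormedRing 𝔸]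
    [NormedAlgebra ℝ 𝔸] [CompleteSpace 𝔸] {f : ℝ → 𝔸} {a : 𝔸} {x : ℝ}
    (hderiv : ∀ t ∈ Ici x, HasDerivAt f (-(a * f t + f t * a)) t)
    (hfi : IntegrableOn f (Ioi x)) (hlim : Tendsto f atTop (𝓝 0)) :
    a * (∫ t in Ioi x, f t) + (∫ t in Ioi x, f t) * a = f x := by
  have hFTC := integral_Ioi_of_hasDerivAt_of_tendsto' hderiv
    ((hfi.const_mul a).add (hfi.mul_const a)).neg hlim
  rwa [integral_neg, integral_add (hfi.const_mul a) (hfi.mul_const a),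
    integral_const_mul_of_integrable hfi, integral_mul_const_of_integrable hfi, zero_sub,
    neg_inj] at hFTC

theorem HasDerivAt.ringInverse {𝕜 R : Type*} [NontriviallyNormedField 𝕜] [NormedRing R]
    [HasSummableGeomSeries R] [NormedAlgebra 𝕜 R] {f : 𝕜 → R} {f' : R} {x : 𝕜}
    (hf : HasDerivAt f f' x) (hx : IsUnit (f x)) :
    HasDerivAt (fun y => Ring.inverse (f y))
      (-(Ring.inverse (f x) * f' * Ring.inverse (f x))) x := by
  obtain ⟨u, hu⟩ := hx
  have h := (hu ▸ hasFDerivAt_ringInverse (𝕜 := 𝕜) u).comp_hasDerivAt x hf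
  rw [← hu, Ring.inverse_unit]
  exact h

/-- For `G = (1 - r²)⁻¹ r` with `r' = -s`, this is `a G + G a - G' = 2 p s p`. -/
theorem riccati_identity {Λ : Type*} [Ring Λ] {a p r s : Λ} (hp : p * (1 - r * r) = 1)
    (hp' : (1 - r * r) * p = 1) (hs : a * r + r * a = s) :
    a * (p * r) + p * r * a + (p * (s * r + r * s) * p * r + p * s) = 2 * (p * s * p) := by
  have hpr : p * r = r * p :=
    calc p * r = p * r * ((1 - r * r) * p) := by rw [hp', mul_one]
      _ = p * ((1 - r * r) * r) * p := by noncomm_ring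
      _ = (p * (1 - r * r)) * r * p := by noncomm_ring
      _ = r * p := by rw [hp, one_mul]
  have hap : a * p = p * a + p * (s * r - r * s) * p :=
    calc a * p = p * ((1 - r * r) * a) * p := by rw [← mul_assoc, hp, one_mul]
      _ = p * a * ((1 - r * r) * p) + p * ((a * r + r * a) * r - r * (a * r + r * a)) * p := by
          noncomm_ring
      _ = p * a + p * (s * r - r * s) * p := by rw [hp', hs]; noncomm_ring
  have hrpr : 1 + r * p * r = p :=
    calc 1 + r * p * r = p * (1 - r * r) + p * r * r := by rw [hp, hpr]
      _ = p := by noncomm_ring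
  calc a * (p * r) + p * r * a + (p * (s * r + r * s) * p * r + p * s)
      = (p * a + p * (s * r - r * s) * p) * r + p * r * a
          + (p * (s * r + r * s) * p * r + p * s) := by
        rw [← mul_assoc, hap]
    _ = p * (a * r + r * a) + 2 * (p * s * (r * p * r)) + p * s := by noncomm_ring
    _ = 2 * (p * s * (1 + r * p * r)) := by rw [hs]; noncomm_ring
    _ = 2 * (p * s * p) := by rw [hrpr]

theorem hasDerivAt_mul_inverse_one_sub_mul_self_mul_mul {𝕜 𝔸 : Type*}
    [NontriviallyNormedField 𝕜] [NormedRing 𝔸] [NormedAlgebra 𝕜 𝔸] [CompleteSpace 𝔸]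
    {E R : 𝕜 → 𝔸} {a s : 𝔸} {x : 𝕜}
    (hE : HasDerivAt E (E x * -a) x) (hEa : Commute a (E x)) (hR : HasDerivAt R (-s) x)
    (hs : a * R x + R x * a = s) (hu : IsUnit (1 - R x * R x)) :
    HasDerivAt (fun y => E y * Ring.inverse (1 - R y * R y) * R y * E y)
      (-2 * (E x * Ring.inverse (1 - R x * R x) * s * Ring.inverse (1 - R x * R x) * E x)) x := by
  have hQ : HasDerivAt (fun y => 1 - R y * R y) (s * R x + R x * s) x := by
    refine ((hR.mul hR).const_sub 1).congr_deriv ?_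
    noncomm_ring
  refine (((hE.mul (hQ.ringInverse hu)).mul hR).mul hE).congr_deriv ?_
  simp only [Pi.mul_apply]
  symm
  generalize hP : Ring.inverse (1 - R x * R x) = P
  calc _ = -(E x * (2 * (P * s * P)) * E x) := by noncomm_ring
    _ = -(E x * (a * (P * R x) + P * R x * a
          + (P * (s * R x + R x * s) * P * R x + P * s)) * E x) := by
        rw [← hP, riccati_identity (Ring.inverse_mul_cancel _ hu)
          (Ring.mul_inverse_cancel _ hu) hs]
    _ = _ := by
        nth_rewrite 2 [show E x * -a = -(a * E x) by rw [mul_neg, hEa.eq]]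
        noncomm_ring

section Semigroup

variable {H : Type*} [NormedAddCommGroup H] [InnerProductSpace ℂ H] [CompleteSpace H]
  (A B : H →L[ℂ] H)

theorem expA_eq_exp_smul (t : ℝ) : expA A t = NormedSpace.exp (t • -A) := by
  rw [expA, smul_neg, ← neg_smul, ← Complex.coe_smul, Complex.ofReal_neg]

theorem hasDerivAt_expA (t : ℝ) : HasDerivAt (expA A) (expA A t * -A) t := by
  simpa only [← expA_eq_exp_smul] using hasDerivAt_exp_smul_const (𝕂 := ℝ) (-A) t

theorem commute_expA (t : ℝ) : Commute A (expA A t) := by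
  rw [expA_eq_exp_smul]
  exact ((Commute.neg_right (Commute.refl A)).smul_right t).exp_right

theorem continuous_expA : Continuous (expA A) :=
  continuous_iff_continuousAt.2 fun t => (hasDerivAt_expA A t).continuousAt

noncomputable def expSandwich (t : ℝ) : H →L[ℂ] H := expA A t * B * expA A t

theorem hasDerivAt_expSandwich (t : ℝ) :
    HasDerivAt (expSandwich A B) (-(A * expSandwich A B t + expSandwich A B t * A)) t := by
  refine (((hasDerivAt_expA A t).mul_const B).mul (hasDerivAt_expA A t)).congr_deriv ?_
  rw [expSandwich, mul_neg]
  nth_rewrite 1 [← (commute_expA A t).eq]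
  noncomm_ring

variable {M ε : ℝ} (hε : 0 < ε)
  (hdecay : ∀ t : ℝ, 0 ≤ t → ‖expA A t‖ ≤ M * Real.exp (-ε * t))
include hε hdecay

theorem tendsto_expA_atTop : Tendsto (expA A) atTop (𝓝 0) := by
  refine squeeze_zero_norm' (eventually_ge_atTop 0 |>.mono hdecay) ?_
  simpa using (Real.tendsto_exp_atBot.comp
    (tendsto_id.const_mul_atTop_of_neg (neg_lt_zero.2 hε))).const_mul M

theorem tendsto_expSandwich_atTop : Tendsto (expSandwich A B) atTop (𝓝 0) := by
  have h := ((tendsto_expA_atTop A hε hdecay).mul_const B).mul (tendsto_expA_atTop A hε hdecay)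
  rw [zero_mul, zero_mul] at h
  exact h

theorem integrableOn_expSandwich : IntegrableOn (expSandwich A B) (Ioi 0) := by
  refine Integrable.mono' ((exp_neg_integrableOn_Ioi 0 (mul_pos two_pos hε)).const_mul
    (M ^ 2 * ‖B‖)) ((continuous_expA A).mul continuous_const |>.mul (continuous_expA A)
      |>.aestronglyMeasurable.restrict) ((ae_restrict_iff' measurableSet_Ioi).2 <|
        ae_of_all _ fun t ht => ?_)
  have hE := hdecay t (le_of_lt ht)
  calc ‖expSandwich A B t‖ ≤ ‖expA A t‖ * ‖B‖ * ‖expA A t‖ := norm_mul₃_le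
    _ ≤ (M * Real.exp (-ε * t)) * ‖B‖ * (M * Real.exp (-ε * t)) := by
        gcongr
        exact mul_nonneg ((norm_nonneg _).trans hE) (norm_nonneg B)
    _ = M ^ 2 * ‖B‖ * Real.exp (-(2 * ε) * t) := by
        rw [show -(2 * ε) * t = -ε * t + -ε * t by ring, Real.exp_add]; ring

theorem hasDerivAt_Rop {x : ℝ} (hx : 0 < x) : HasDerivAt (Rop A B) (-expSandwich A B x) x :=
  hasDerivAt_integral_Ioi ((continuous_expA A).mul continuous_const |>.mul (continuous_expA A))
    (integrableOn_expSandwich A B hε hdecay) hx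

theorem mul_Rop_add_Rop_mul {x : ℝ} (hx : 0 ≤ x) :
    A * Rop A B x + Rop A B x * A = expSandwich A B x :=
  mul_integral_Ioi_add_integral_Ioi_mul (fun t _ => hasDerivAt_expSandwich A B t)
    ((integrableOn_expSandwich A B hε hdecay).mono_set (Ioi_subset_Ioi hx))
    (tendsto_expSandwich_atTop A B hε hdecay)

end Semigroup

theorem derivative_of_W_general
    {H : Type*} [NormedAddCommGroup H] [InnerProductSpace ℂ H] [CompleteSpace H]
    (A : H →L[ℂ] H) (b : H) (C : H →L[ℂ] ℂ)
    (M ε : ℝ) (hε : 0 < ε)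
    (hdecay : ∀ t : ℝ, 0 ≤ t → ‖expA A t‖ ≤ M * Real.exp (-ε * t))
    (J : Set ℝ) (hJsub : J ⊆ Set.Ioi (0 : ℝ))
    (hinvp : ∀ x ∈ J, IsUnit (1 + Rop A (C.smulRight b) x))
    (hinvm : ∀ x ∈ J, IsUnit (1 - Rop A (C.smulRight b) x))
    (W : ℝ → ℂ)
    (hW : ∀ x : ℝ, W x = C ((expA A x *
      Ring.inverse (1 - Rop A (C.smulRight b) x * Rop A (C.smulRight b) x) *
      Rop A (C.smulRight b) x * expA A x) b))
    (V : ℝ → ℂ)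
    (hV : ∀ x : ℝ, V x = -(C ((expA A x *
      Ring.inverse (1 - Rop A (C.smulRight b) x * Rop A (C.smulRight b) x) *
      expA A x) b))) :
    ∀ x ∈ J, HasDerivAt W (-2 * (V x) ^ 2) x := by
  intro x hx
  set R := Rop A (C.smulRight b)
  have hx₀ : 0 < x := hJsub hx
  have hu : IsUnit (1 - R x * R x) := by
    convert (hinvm x hx).mul (hinvp x hx) using 1
    noncomm_ring
  have hF := hasDerivAt_mul_inverse_one_sub_mul_self_mul_mul (hasDerivAt_expA A x)
    (commute_expA A x) (hasDerivAt_Rop A _ hε hdecay hx₀)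
    (mul_Rop_add_Rop_mul A _ hε hdecay hx₀.le) hu
  let evalC : (H →L[ℂ] H) →L[ℝ] ℂ :=
    (C.comp (ContinuousLinearMap.apply ℂ H b)).restrictScalars ℝ
  rw [funext hW]
  refine (evalC.hasFDerivAt.comp_hasDerivAt x hF).congr_deriv ?_
  simp only [evalC, hV x, expSandwich, ContinuousLinearMap.coe_restrictScalars',
    ContinuousLinearMap.comp_apply, ContinuousLinearMap.apply_apply, mul_apply_eq_comp,
    ContinuousLinearMap.smulRight_apply, ContinuousLinearMap.ofNat_apply,
    map_neg, map_smul, ContinuousLinearMap.map_smul_of_tower, smul_eq_mul, neg_mul]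
  ring

/-- With the rank-one operator `BC : v ↦ C(v)·b` and `R_x` as above, if both `I + R_x` and
`I − R_x` are invertible for all `x` in an open interval `J`, then
`W(x) = C(exp(−xA)·(I − R_x²)⁻¹·R_x·exp(−xA)·b)` is differentiable on `J` and satisfies
`W′(x) = −2·V(x)²`, where `V(x) = −C(exp(−xA)·(I − R_x²)⁻¹·exp(−xA)·b)`. -/
theorem derivative_of_W
    {H : Type*} [NormedAddCommGroup H] [InnerProductSpace ℂ H] [CompleteSpace H]
    (A : H →L[ℂ] H) (b : H) (C : H →L[ℂ] ℂ)
    (M ε : ℝ) (hM : 0 < M) (hε : 0 < ε)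
    (hdecay : ∀ t : ℝ, 0 ≤ t → ‖expA A t‖ ≤ M * Real.exp (-ε * t))
    (J : Set ℝ) (hJopen : IsOpen J) (hJsub : J ⊆ Set.Ioi (0 : ℝ))
    (hinvp : ∀ x ∈ J, IsUnit (1 + Rop A (C.smulRight b) x))
    (hinvm : ∀ x ∈ J, IsUnit (1 - Rop A (C.smulRight b) x))
    (W : ℝ → ℂ)
    (hW : ∀ x : ℝ, W x = C ((expA A x *
      Ring.inverse (1 - Rop A (C.smulRight b) x * Rop A (C.smulRight b) x) *
      Rop A (C.smulRight b) x * expA A x) b))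
    (V : ℝ → ℂ)
    (hV : ∀ x : ℝ, V x = -(C ((expA A x *
      Ring.inverse (1 - Rop A (C.smulRight b) x * Rop A (C.smulRight b) x) *
      expA A x) b))) :
    ∀ x ∈ J, HasDerivAt W (-2 * (V x) ^ 2) x :=
  derivative_of_W_general A b C M ε hε hdecay J hJsub hinvp hinvm W hW V hV
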